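/- The preference P_h : xz ≻ ∅ (over contracts x and z with distinct doctors, both individually unacceptable) is pseudo-substitutable but not bilaterally substitutable: taking Y = ∅, we have z ∉ C(∅ ∪ {z}) yet z ∈ C(∅ ∪ {x, z}) with neither doctor in Y_D. -/

import Mathlib

inductive Ctr | x | z
  deriving DecidableEq

open Ctr

/-- Doctors of the two contracts (distinct). -/
def doc : Ctr → Fin 2
  | x => 0
  | z => 1

/-- Choice function of `P_h : xz ≻ ∅`. -/
def CP (S : Finset Ctr) : Finset Ctr :=
  if x ∈ S ∧ z ∈ S then {x, z} else ∅

def Substitutable (C : Finset Ctr → Finset Ctr) : Prop :=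
  ∀ (S : Finset Ctr) (w w' : Ctr), w ∈ S → w' ∈ S → w ≠ w' → w' ∈ C S → w' ∈ C (S.erase w)

def SubPref (C' C : Finset Ctr → Finset Ctr) : Prop :=
  (∀ S : Finset Ctr, C' S = S → C S = S) ∧
  (∀ (S : Finset Ctr) (w : Ctr), C' S = S → w ∉ S → w ∈ C (insert w S) → w ∈ C' (insert w S))

/-- Bilateral substitutability: there are no contracts `w, c` and set `Y` with
`doc w, doc c ∉ Y_D`, `c ∉ C(Y ∪ {c})` and `c ∈ C(Y ∪ {w, c})`. -/
def BilateralSubstitutable (C : Finset Ctr → Finset Ctr) : Prop :=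
  ¬ ∃ (w c : Ctr) (Y : Finset Ctr),
      doc w ∉ Y.image doc ∧ doc c ∉ Y.image doc ∧
      c ∉ C (insert c Y) ∧ c ∈ C (insert c (insert w Y))

theorem substitutable_const_empty : Substitutable fun _ => ∅ :=
  fun _ _ _ _ _ _ h => absurd h (Finset.notMem_empty _)

theorem subPref_const_empty {C : Finset Ctr → Finset Ctr} (h_empty : C ∅ = ∅)
    (h_singleton : ∀ w, w ∉ C {w}) : SubPref (fun _ => ∅) C := by
  refine ⟨fun S hS => ?_, fun S w hS _ hw => ?_⟩
  · rw [← hS, h_empty]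
  · rw [← show (∅ : Finset Ctr) = S from hS, Finset.insert_empty] at hw
    exact absurd hw (h_singleton w)

theorem not_bilateralSubstitutable_of_complements {C : Finset Ctr → Finset Ctr} {w c : Ctr}
    (h_alone : c ∉ C {c}) (h_together : c ∈ C {c, w}) : ¬ BilateralSubstitutable C :=
  fun h => h ⟨w, c, ∅, Finset.notMem_empty _, Finset.notMem_empty _, h_alone, h_together⟩

theorem CP_empty : CP ∅ = ∅ := rfl

theorem notMem_CP_singleton (w : Ctr) : w ∉ CP {w} := by
  cases w <;> decide

theorem z_mem_CP_pair : z ∈ CP {z, x} := by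
  decide

/-- `P_h : xz ≻ ∅` is pseudo-substitutable but not bilaterally substitutable:
with `Y = ∅`, `z ∉ C({z})` yet `z ∈ C({x, z})`. -/
theorem CP_pseudo_not_bilateral :
    (∃ C' : Finset Ctr → Finset Ctr, Substitutable C' ∧ SubPref C' CP) ∧
    ¬ BilateralSubstitutable CP ∧
    z ∉ CP (insert z ∅) ∧ z ∈ CP (insert z (insert x ∅)) := by
  simp only [Finset.insert_empty]
  exact ⟨⟨fun _ => ∅, substitutable_const_empty, subPref_const_empty CP_empty notMem_CP_singleton⟩,
    not_bilateralSubstitutable_of_complements (notMem_CP_singleton z) z_mem_CP_pair,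
    notMem_CP_singleton z, z_mem_CP_pair⟩
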